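/- Let λ be an uncountable cardinal with λ^{<λ} = λ, and let 1 < θ < λ. Suppose ⟨f_i : i < θ⟩ is a family of regressive functions on some club C of λ⁺. Then there exist a club D of λ⁺ and a regressive function g on D such that for all α, β ∈ C ∩ D ∩ S^{λ⁺}_λ, if g(α) = g(β) then f_i(α) = f_i(β) for every i < θ. -/

import Mathlib

open Cardinal Set

/-- `C` is a closed unbounded subset of (the set of ordinals below) `κ`. -/
def IsClubIn (κ : Ordinal) (C : Set Ordinal) : Prop :=
  (∀ a ∈ C, a < κ) ∧
  (∀ a < κ, ∃ b ∈ C, a ≤ b) ∧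
  (∀ a < κ, a ≠ 0 → (∀ b < a, ∃ c ∈ C, b < c ∧ c < a) → a ∈ C)

/-- Combining `θ < λ` many regressive functions on a club `C` of `λ⁺` into a single
regressive function `g` on a club `D`, so that on `C ∩ D ∩ S^{λ⁺}_λ`, equality of
`g`-values implies equality of all the `f_i`-values. -/
theorem combine_regressive_functions
    (lam θ : Cardinal) (hlam : ℵ₀ < lam) (hpow : lam ^< lam = lam)
    (hθ1 : 1 < θ) (hθ2 : θ < lam)
    (C : Set Ordinal) (hC : IsClubIn (Order.succ lam).ord C)
    (f : Ordinal → Ordinal → Ordinal)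
    (hreg : ∀ i < θ.ord, ∀ α ∈ C, α ≠ 0 → f i α < α) :
    ∃ D : Set Ordinal, ∃ g : Ordinal → Ordinal,
      IsClubIn (Order.succ lam).ord D ∧
      (∀ α ∈ D, α ≠ 0 → g α < α) ∧
      (∀ α ∈ C ∩ D, ∀ β ∈ C ∩ D, Ordinal.cof α = lam → Ordinal.cof β = lam →
        g α = g β → ∀ i < θ.ord, f i α = f i β) := by
  classical
  set κ := (Order.succ lam).ord with hκdef
  have hlamle : ℵ₀ ≤ lam := hlam.le
  have hL0 : (0 : Ordinal) < lam.ord := by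
    have h := Cardinal.ord_lt_ord.2 hlam
    rw [Cardinal.ord_aleph0] at h
    exact lt_trans Ordinal.omega0_pos h
  have hLne : lam.ord ≠ 0 := hL0.ne'
  have hcofκ : κ.cof = Order.succ lam := (Cardinal.isRegular_succ hlamle).cof_eq
  have hcard : ∀ {x : Ordinal}, x < κ → x.card ≤ lam := fun hx =>
    Order.lt_succ_iff.1 (Cardinal.lt_ord.1 hx)
  have hκmul : ∀ x < κ, lam.ord * x < κ := by
    intro x hx
    rw [Cardinal.lt_ord, Ordinal.card_mul, Cardinal.card_ord]
    calc lam * x.card ≤ lam * lam := mul_le_mul_right (hcard hx) lam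
      _ = lam := Cardinal.mul_eq_self hlamle
      _ < Order.succ lam := Order.lt_succ lam
  -- the club `D` of fixed points of multiplication by `lam.ord`
  set D : Set Ordinal := {a | a < κ ∧ lam.ord * a = a} with hD
  have hDclub : IsClubIn κ D := by
    refine ⟨fun a ha => ha.1, ?_, ?_⟩
    · intro a ha
      refine ⟨Ordinal.nfp (lam.ord * ·) a, ⟨?_, ?_⟩, Ordinal.le_nfp _ _⟩
      · exact Ordinal.nfp_lt_ord
          (by rw [hcofκ]; exact hlam.trans_le (Order.le_succ lam)) hκmul ha
      · exact Ordinal.nfp_fp (Ordinal.isNormal_mul_right hL0) a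
    · intro a ha h0 hcl
      have hlim : Order.IsSuccLimit a := by
        refine Ordinal.isSuccLimit_iff.2 ⟨h0, Order.isSuccPrelimit_of_succ_lt fun b hb => ?_⟩
        obtain ⟨c, _, hbc, hca⟩ := hcl b hb
        exact lt_of_le_of_lt (Order.succ_le_of_lt hbc) hca
      refine ⟨ha, le_antisymm ?_ (Ordinal.le_mul_right a hL0)⟩
      rw [Ordinal.mul_le_iff_of_isSuccLimit hlim]
      intro b hb
      obtain ⟨c, hc, hbc, hca⟩ := hcl b hb
      calc lam.ord * b ≤ lam.ord * c := mul_le_mul_right hbc.le _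
        _ = c := hc.2
        _ ≤ a := hca.le
  -- the sequence of values and its strict supremum
  set ι := θ.ord.ToType with hι
  set sfun : Ordinal → ι → Ordinal :=
    fun α i => f ((Ordinal.ToType.mk (o := θ.ord)).symm i).1 α with hsfun
  set bfun : Ordinal → Ordinal := fun α => ⨆ i : ι, sfun α i + 1 with hbfun
  have hsb : ∀ α (i : ι), sfun α i < bfun α := by
    intro α i
    have h1 : sfun α i < sfun α i + 1 := by
      rw [Ordinal.add_one_eq_succ]; exact Order.lt_succ _
    exact h1.trans_le (Ordinal.le_iSup (fun i => sfun α i + 1) i)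
  -- coding sequences below `b` into `Iio lam.ord`
  have hemb : ∀ b : Ordinal, b.card ≤ lam →
      Nonempty ({s : ι → Ordinal // ∀ i, s i < b} ↪ Set.Iio lam.ord) := by
    intro b hb
    refine (Cardinal.le_def _ _).1 ?_
    have h1 : #{s : ι → Ordinal // ∀ i, s i < b} ≤ #(ι → Set.Iio b) := by
      refine Cardinal.mk_le_of_injective (f := fun s i => (⟨s.1 i, s.2 i⟩ : Set.Iio b)) ?_
      intro s t hst
      apply Subtype.ext
      funext i
      exact congrArg Subtype.val (congrFun hst i)
    refine h1.trans ?_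
    rw [hι]
    simp only [Cardinal.mk_arrow, Ordinal.mk_Iio_ordinal, Cardinal.mk_toType,
      Cardinal.card_ord, Cardinal.lift_lift, ← Cardinal.lift_power]
    refine Cardinal.lift_le.2 ?_
    calc b.card ^ θ ≤ lam ^ θ := Cardinal.power_le_power_right hb
      _ ≤ lam ^< lam := Cardinal.le_powerlt lam hθ2
      _ = lam := hpow
  set E : ∀ b : Ordinal, b.card ≤ lam →
      ({s : ι → Ordinal // ∀ i, s i < b} ↪ Set.Iio lam.ord) :=
    fun b hb => (hemb b hb).some with hE
  set g : Ordinal → Ordinal := fun α =>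
    if h : α ∈ C ∧ α < κ ∧ bfun α < α then
      lam.ord * bfun α +
        (↑(E (bfun α) (hcard (h.2.2.trans h.2.1)) ⟨sfun α, fun i => hsb α i⟩) : Ordinal)
    else 0 with hg
  refine ⟨D, g, hDclub, ?_, ?_⟩
  · -- regressive
    intro α hα hα0
    by_cases h : α ∈ C ∧ α < κ ∧ bfun α < α
    · have hμ : (↑(E (bfun α) (hcard (h.2.2.trans h.2.1)) ⟨sfun α, fun i => hsb α i⟩) :
          Ordinal) < lam.ord :=
        (E (bfun α) (hcard (h.2.2.trans h.2.1)) ⟨sfun α, fun i => hsb α i⟩).2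
      have hgα : g α = lam.ord * bfun α +
          (↑(E (bfun α) (hcard (h.2.2.trans h.2.1)) ⟨sfun α, fun i => hsb α i⟩) : Ordinal) := by
        rw [hg]; exact dif_pos h
      rw [hgα]
      calc lam.ord * bfun α + _ < lam.ord * bfun α + lam.ord := add_lt_add_right hμ _
        _ = lam.ord * (bfun α + 1) := by rw [mul_add, mul_one]
        _ ≤ lam.ord * α := by
            refine mul_le_mul_right ?_ _
            rw [Ordinal.add_one_eq_succ]
            exact Order.succ_le_of_lt h.2.2
        _ = α := hα.2
    · have hgα : g α = 0 := by rw [hg]; exact dif_neg h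
      rw [hgα]
      exact pos_iff_ne_zero.2 hα0
  · -- the main property
    intro α hα β hβ hcα hcβ hgg i hi
    obtain ⟨hαC, hαD⟩ := hα
    obtain ⟨hβC, hβD⟩ := hβ
    have hlamne : lam ≠ 0 := (Cardinal.aleph0_pos.trans hlam).ne'
    have hα0 : α ≠ 0 := by rintro rfl; exact hlamne (hcα.symm.trans Ordinal.cof_zero)
    have hβ0 : β ≠ 0 := by rintro rfl; exact hlamne (hcβ.symm.trans Ordinal.cof_zero)
    have hlimα : Order.IsSuccLimit α := Ordinal.aleph0_le_cof.1 (by rw [hcα]; exact hlamle)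
    have hlimβ : Order.IsSuccLimit β := Ordinal.aleph0_le_cof.1 (by rw [hcβ]; exact hlamle)
    have hbsup : ∀ γ, γ ∈ C → γ ≠ 0 → Order.IsSuccLimit γ → Ordinal.cof γ = lam →
        bfun γ < γ := by
      intro γ hγC hγ0 hγlim hγcof
      rw [hbfun]
      refine Ordinal.iSup_lt_ord ?_ ?_
      · rw [hι, Cardinal.mk_toType, Cardinal.card_ord, hγcof]; exact hθ2
      · intro j
        have h1 : sfun γ j < γ :=
          hreg _ ((Ordinal.ToType.mk (o := θ.ord)).symm j).2 γ hγC hγ0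
        rw [Ordinal.add_one_eq_succ]
        exact hγlim.succ_lt h1
    have hPα : α ∈ C ∧ α < κ ∧ bfun α < α :=
      ⟨hαC, hαD.1, hbsup α hαC hα0 hlimα hcα⟩
    have hPβ : β ∈ C ∧ β < κ ∧ bfun β < β :=
      ⟨hβC, hβD.1, hbsup β hβC hβ0 hlimβ hcβ⟩
    set cα : Ordinal :=
      ↑(E (bfun α) (hcard (hPα.2.2.trans hPα.2.1)) ⟨sfun α, fun i => hsb α i⟩) with hcαdef
    set cβ : Ordinal :=
      ↑(E (bfun β) (hcard (hPβ.2.2.trans hPβ.2.1)) ⟨sfun β, fun i => hsb β i⟩) with hcβdef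
    have hcα_lt : cα < lam.ord := by
      rw [hcαdef]
      exact (E (bfun α) (hcard (hPα.2.2.trans hPα.2.1)) ⟨sfun α, fun i => hsb α i⟩).2
    have hcβ_lt : cβ < lam.ord := by
      rw [hcβdef]
      exact (E (bfun β) (hcard (hPβ.2.2.trans hPβ.2.1)) ⟨sfun β, fun i => hsb β i⟩).2
    have hgg' : lam.ord * bfun α + cα = lam.ord * bfun β + cβ := by
      have h1 : g α = lam.ord * bfun α + cα := by rw [hg, hcαdef]; exact dif_pos hPα
      have h2 : g β = lam.ord * bfun β + cβ := by rw [hg, hcβdef]; exact dif_pos hPβ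
      rw [← h1, ← h2]; exact hgg
    have hbb : bfun α = bfun β := by
      have h1 := congrArg (· / lam.ord) hgg'
      simpa only [Ordinal.mul_add_div _ hLne, Ordinal.div_eq_zero_of_lt hcα_lt,
        Ordinal.div_eq_zero_of_lt hcβ_lt, add_zero] using h1
    have hcc : cα = cβ := by
      have h1 := congrArg (· % lam.ord) hgg'
      simpa only [Ordinal.mul_add_mod_self, Ordinal.mod_eq_of_lt hcα_lt,
        Ordinal.mod_eq_of_lt hcβ_lt] using h1
    -- transport the β-code to live over `bfun α`
    have trick : ∀ b b' (hb : b = b') (h1 : b.card ≤ lam) (h2 : b'.card ≤ lam)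
        (s : ι → Ordinal) (hs : ∀ i, s i < b) (hs' : ∀ i, s i < b'),
        (↑(E b h1 ⟨s, hs⟩) : Ordinal) = ↑(E b' h2 ⟨s, hs'⟩) := by
      rintro b b' rfl h1 h2 s hs hs'
      rfl
    have hs'' : ∀ j : ι, sfun β j < bfun α := by
      intro j; rw [hbb]; exact hsb β j
    have hcβ' : cβ = ↑(E (bfun α) (hcard (hPα.2.2.trans hPα.2.1)) ⟨sfun β, hs''⟩) := by
      rw [hcβdef]
      exact trick (bfun β) (bfun α) hbb.symm (hcard (hPβ.2.2.trans hPβ.2.1))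
        (hcard (hPα.2.2.trans hPα.2.1)) (sfun β) (fun i => hsb β i) hs''
    have hfinal : (⟨sfun α, fun i => hsb α i⟩ :
        {s : ι → Ordinal // ∀ i, s i < bfun α}) = ⟨sfun β, hs''⟩ := by
      refine (E (bfun α) (hcard (hPα.2.2.trans hPα.2.1))).injective ?_
      apply Subtype.coe_injective
      exact hcαdef.symm.trans (hcc.trans hcβ')
    have hsfeq : sfun α = sfun β := congrArg Subtype.val hfinal
    have h3 := congrFun hsfeq ((Ordinal.ToType.mk (o := θ.ord)) ⟨i, hi⟩)
    rw [hsfun] at h3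
    simpa only [OrderIso.symm_apply_apply] using h3
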